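/- arXiv:2212.06911 — 3 statements merged into one kernel-verified Lean document; each statement's English description precedes it below -/
import Mathlib

section
/- Let C_1, …, C_m ⊆ ℝⁿ be closed convex sets with C := ∩_{i=1}^m C_i ≠ ∅. Let ℓ(k), r(k) ∈ {1, …, m} be given by the most violated constraint control in distance version: for every k and every i ∈ {1, …, m}, dist(x^k, C_{ℓ(k)}) ≥ dist(x^k, C_i) and dist(P_{C_{ℓ(k)}}(x^k), C_{r(k)}) ≥ dist(P_{C_{ℓ(k)}}(x^k), C_i). Let {x^k} be generated from any x^0 ∈ ℝⁿ by x^{k+1} := T_{C_{ℓ(k)}, C_{r(k)}}(x^k). Then there exists x* ∈ C such that x^k → x*. -/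
noncomputable section

open Filter Metric RealInnerProductSpace

/-- Euclidean space ℝⁿ. -/
abbrev Euc (n : ℕ) := EuclideanSpace ℝ (Fin n)

/-- `P` is the metric projection onto `A`: `P x` is a point of `A` nearest to `x`. -/
def IsProjection {n : ℕ} (A : Set (Euc n)) (P : Euc n → Euc n) : Prop :=
  ∀ x, P x ∈ A ∧ ∀ a ∈ A, ‖x - P x‖ ≤ ‖x - a‖

/-- Reflection `R_A = 2 P_A - Id`, given the projection `P = P_A`. -/
def reflect {n : ℕ} (P : Euc n → Euc n) (x : Euc n) : Euc n := (2 : ℝ) • P x - x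

/-- `Z̄_{A,B} = Z̃_{A,B} ∘ Z_{A,B}`, where `Z_{A,B} = P_A ∘ P_B` and
`Z̃_{A,B} = (1/2)(P_A + P_B)`. -/
def Zbar {n : ℕ} (PA PB : Euc n → Euc n) (x : Euc n) : Euc n :=
  (2⁻¹ : ℝ) • (PA (PA (PB x)) + PB (PA (PB x)))

/-- `c` is the circumcenter of `w`, `R_A w`, `R_B w`: it lies in the affine hull of these
three points and is equidistant from them. -/
def IsCircumcenter {n : ℕ} (PA PB : Euc n → Euc n) (w c : Euc n) : Prop :=
  c ∈ affineSpan ℝ ({w, reflect PA w, reflect PB w} : Set (Euc n)) ∧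
    ‖c - w‖ = ‖c - reflect PA w‖ ∧ ‖c - w‖ = ‖c - reflect PB w‖

variable {n : ℕ}


/-- Variational characterization of the projection. -/
lemma proj_inner_le {A : Set (Euc n)} (hA : Convex ℝ A) {P : Euc n → Euc n}
    (hP : IsProjection A P) (x : Euc n) {a : Euc n} (ha : a ∈ A) :
    ⟪x - P x, a - P x⟫ ≤ 0 := by
  have key : ∀ t : ℝ, 0 < t → t ≤ 1 →
      2 * t * ⟪x - P x, a - P x⟫ ≤ t ^ 2 * ‖a - P x‖ ^ 2 := by
    intro t ht ht1
    have hmem : (1 - t) • P x + t • a ∈ A :=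
      hA (hP x).1 ha (by linarith) ht.le (by ring)
    have hle := (hP x).2 _ hmem
    have hrw : x - ((1 - t) • P x + t • a) = (x - P x) - t • (a - P x) := by
      module
    rw [hrw] at hle
    have hsq := mul_self_le_mul_self (norm_nonneg _) hle
    have hexp : ‖(x - P x) - t • (a - P x)‖ ^ 2 =
        ‖x - P x‖ ^ 2 - 2 * t * ⟪x - P x, a - P x⟫ + t ^ 2 * ‖a - P x‖ ^ 2 := by
      rw [norm_sub_sq_real, real_inner_smul_right, norm_smul]
      simp [Real.norm_eq_abs, mul_pow, sq_abs]
      ring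
    nlinarith [hsq, hexp]
  by_contra hcon
  push_neg at hcon
  set δ := ⟪x - P x, a - P x⟫ with hδ
  set M := ‖a - P x‖ ^ 2 with hM
  have hM0 : 0 ≤ M := by positivity
  rcases eq_or_lt_of_le hM0 with hM0' | hM0'
  · have := key 1 one_pos le_rfl
    rw [← hM0'] at this
    nlinarith
  · set t := min 1 (δ / M) with htdef
    have htpos : 0 < t := lt_min one_pos (div_pos hcon hM0')
    have ht1 : t ≤ 1 := min_le_left _ _
    have h2 : t ≤ δ / M := min_le_right _ _
    have hk := key t htpos ht1
    have hmm : t * M ≤ δ := (le_div_iff₀ hM0').mp h2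
    nlinarith [mul_le_mul_of_nonneg_left hmm htpos.le]

/-- Firm quasi-nonexpansiveness of the projection. -/
lemma proj_firm {A : Set (Euc n)} (hA : Convex ℝ A) {P : Euc n → Euc n}
    (hP : IsProjection A P) (x : Euc n) {s : Euc n} (hs : s ∈ A) :
    ‖P x - s‖ ^ 2 + ‖x - P x‖ ^ 2 ≤ ‖x - s‖ ^ 2 := by
  have h := proj_inner_le hA hP x hs
  have hexp : ‖x - s‖ ^ 2 = ‖x - P x‖ ^ 2 + 2 * ⟪x - P x, P x - s⟫ + ‖P x - s‖ ^ 2 := by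
    have : x - s = (x - P x) + (P x - s) := by abel
    rw [this, norm_add_sq_real]
  have h2 : ⟪x - P x, P x - s⟫ = - ⟪x - P x, s - P x⟫ := by
    rw [← inner_neg_right]; congr 1; abel
  nlinarith

lemma proj_idem {A : Set (Euc n)} {P : Euc n → Euc n} (hP : IsProjection A P)
    (x : Euc n) : P (P x) = P x := by
  have := (hP (P x)).2 (P x) (hP x).1
  simp only [sub_self, norm_zero] at this
  have : ‖P x - P (P x)‖ = 0 := le_antisymm this (norm_nonneg _)
  exact (sub_eq_zero.mp (norm_eq_zero.mp this)).symm

/-- Uniqueness: a point satisfying the variational inequality is the projection. -/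
lemma proj_unique {A : Set (Euc n)} {P : Euc n → Euc n} (hP : IsProjection A P)
    (x : Euc n) {p : Euc n} (hpA : p ∈ A)
    (hopt : ∀ a ∈ A, ⟪x - p, a - p⟫ ≤ 0) : P x = p := by
  have h1 : ‖x - P x‖ ≤ ‖x - p‖ := (hP x).2 p hpA
  have h2 := hopt (P x) (hP x).1
  have hexp : ‖x - P x‖ ^ 2 = ‖x - p‖ ^ 2 - 2 * ⟪x - p, P x - p⟫ + ‖P x - p‖ ^ 2 := by
    have : x - P x = (x - p) - (P x - p) := by abel
    rw [this, norm_sub_sq_real]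
  have hsq := mul_self_le_mul_self (norm_nonneg _) h1
  have : ‖P x - p‖ ^ 2 ≤ 0 := by nlinarith
  have : ‖P x - p‖ = 0 := by nlinarith [norm_nonneg (P x - p), sq_nonneg (‖P x - p‖)]
  exact sub_eq_zero.mp (norm_eq_zero.mp this)

/-- Scalar core of the circumcenter argument. -/
lemma scalar_key {A1 B1 G Sa Sb S2 α β : ℝ}
    (hA1 : 0 ≤ A1) (hB1 : 0 ≤ B1) (hS2 : 0 ≤ S2)
    (hCS : G ^ 2 ≤ A1 * B1) (hCSa : Sa ^ 2 ≤ S2 * A1) (hCSb : Sb ^ 2 ≤ S2 * B1)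
    (hG : G ≤ -A1) (hSa : A1 ≤ Sa) (hSb : B1 ≤ Sb)
    (e1 : α * A1 + β * G = A1) (e2 : α * G + β * B1 = B1) :
    0 ≤ α * (Sa - A1) + β * (Sb - B1) := by
  rcases eq_or_lt_of_le hA1 with h0 | hApos
  · -- A1 = 0 ⇒ Sa = 0, G = 0
    have hG0 : G = 0 := by nlinarith
    have hSa0 : Sa = 0 := by nlinarith
    rcases eq_or_lt_of_le hB1 with hb0 | hBpos
    · have : Sb = 0 := by nlinarith
      rw [← h0, hSa0, ← hb0, this]; ring_nf; simp
    · have hβ : β = 1 := by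
        have h' : β * B1 = 1 * B1 := by rw [hG0] at e2; linarith
        exact mul_right_cancel₀ (ne_of_gt hBpos) h'
      rw [← h0, hSa0, hβ]; nlinarith
  · -- A1 > 0
    have hGneg : G < 0 := lt_of_le_of_lt hG (by linarith)
    have hD : 0 < A1 * B1 - G ^ 2 := by
      rcases eq_or_lt_of_le hCS with h | h
      · exfalso
        -- D = 0: α*(A1*B1 - G²) = B1*(A1 - G) forces B1 = 0 then G = 0, contra
        have hcomb : α * (A1 * B1 - G ^ 2) = B1 * (A1 - G) := by nlinarith [e1, e2]
        have hB0 : B1 = 0 := by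
          have hAG : 0 < A1 - G := by linarith
          have : B1 * (A1 - G) = 0 := by rw [← hcomb, ← h]; ring
          rcases mul_eq_zero.mp this with h' | h'
          · exact h'
          · linarith
        have : G ^ 2 ≤ 0 := by nlinarith
        nlinarith
      · linarith
    have hα : 0 ≤ α := by
      have hcomb : α * (A1 * B1 - G ^ 2) = B1 * (A1 - G) := by nlinarith [e1, e2]
      nlinarith
    have hβ : 0 ≤ β := by
      have hcomb : β * (A1 * B1 - G ^ 2) = A1 * (B1 - G) := by nlinarith [e1, e2]
      nlinarith
    nlinarith

lemma equidist_inner {w c p : Euc n} (h : ‖c - w‖ = ‖c - ((2:ℝ) • p - w)‖) :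
    ⟪c - w, p - w⟫ = ‖p - w‖ ^ 2 := by
  have hrw : c - ((2:ℝ) • p - w) = (c - w) - (2:ℝ) • (p - w) := by module
  rw [hrw] at h
  have hexp := norm_sub_sq_real (c - w) ((2:ℝ) • (p - w))
  rw [real_inner_smul_right, norm_smul] at hexp
  have h2 : ‖c - w‖ ^ 2 = ‖(c - w) - (2:ℝ) • (p - w)‖ ^ 2 := by rw [h]
  have h3 : ‖(2:ℝ)‖ = 2 := by norm_num
  rw [h3] at hexp
  nlinarith [h2, hexp]

lemma step_key {A B : Set (Euc n)} (hAcv : Convex ℝ A) (hBcv : Convex ℝ B)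
    {PA PB : Euc n → Euc n} (hPA : IsProjection A PA) (hPB : IsProjection B PB)
    (x c : Euc n) (hc : IsCircumcenter PA PB (Zbar PA PB x) c)
    {s : Euc n} (hsA : s ∈ A) (hsB : s ∈ B) :
    ‖c - s‖ ^ 2 + ‖x - PB x‖ ^ 2 + ‖PB x - PA (PB x)‖ ^ 2 ≤ ‖x - s‖ ^ 2 := by
  set Z := PA (PB x) with hZdef
  set w := Zbar PA PB x with hwdef
  have hZA : Z ∈ A := (hPA (PB x)).1
  have hweq : w = (2⁻¹ : ℝ) • (Z + PB Z) := by
    rw [hwdef, Zbar, proj_idem hPA]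
  have hPBw : PB w = PB Z := by
    apply proj_unique hPB w (hPB Z).1
    intro b hb
    have h1 := proj_inner_le hBcv hPB Z hb
    have hrw : w - PB Z = (2⁻¹ : ℝ) • (Z - PB Z) := by rw [hweq]; module
    rw [hrw, real_inner_smul_left]
    nlinarith [h1]
  set a := PA w - w with ha
  set b := PB w - w with hb
  have hZw : Z - w = -b := by rw [hb, hPBw, hweq]; module
  obtain ⟨hcspan, hc1, hc2⟩ := hc
  have hkey1 : ⟪c - w, a⟫ = ‖a‖ ^ 2 := by
    have h' : ‖c - w‖ = ‖c - ((2:ℝ) • PA w - w)‖ := hc1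
    have := equidist_inner h'
    rw [ha]; exact this
  have hkey2 : ⟪c - w, b⟫ = ‖b‖ ^ 2 := by
    have h' : ‖c - w‖ = ‖c - ((2:ℝ) • PB w - w)‖ := hc2
    have := equidist_inner h'
    rw [hb]; exact this
  -- span membership
  have hsub : affineSpan ℝ ({w, reflect PA w, reflect PB w} : Set (Euc n)) ≤
      AffineSubspace.mk' w (Submodule.span ℝ {a, b}) := by
    rw [affineSpan_le]
    intro z hz
    simp only [Set.mem_insert_iff, Set.mem_singleton_iff] at hz
    rcases hz with rfl | rfl | rfl
    · exact AffineSubspace.self_mem_mk' _ _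
    · rw [SetLike.mem_coe, AffineSubspace.mem_mk']
      have : reflect PA w -ᵥ w = (2:ℝ) • a := by
        rw [vsub_eq_sub, reflect, ha]; module
      rw [this]
      exact Submodule.smul_mem _ _ (Submodule.subset_span (by simp))
    · rw [SetLike.mem_coe, AffineSubspace.mem_mk']
      have : reflect PB w -ᵥ w = (2:ℝ) • b := by
        rw [vsub_eq_sub, reflect, hb]; module
      rw [this]
      exact Submodule.smul_mem _ _ (Submodule.subset_span (by simp))
  have hmem : c -ᵥ w ∈ Submodule.span ℝ ({a, b} : Set (Euc n)) :=
    AffineSubspace.mem_mk'.mp (hsub hcspan)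
  obtain ⟨α, β, hαβ⟩ := Submodule.mem_span_pair.mp hmem
  rw [vsub_eq_sub] at hαβ
  -- inequalities for s
  have hsa : ‖a‖ ^ 2 ≤ ⟪s - w, a⟫ := by
    have h := proj_inner_le hAcv hPA w hsA
    have h1 : w - PA w = -a := by rw [ha]; abel
    have h2 : s - PA w = (s - w) - a := by rw [ha]; abel
    rw [h1, h2, inner_neg_left, inner_sub_right, real_inner_self_eq_norm_sq] at h
    linarith [real_inner_comm a (s - w)]
  have hsb : ‖b‖ ^ 2 ≤ ⟪s - w, b⟫ := by
    have h := proj_inner_le hBcv hPB w hsB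
    have h1 : w - PB w = -b := by rw [hb]; abel
    have h2 : s - PB w = (s - w) - b := by rw [hb]; abel
    rw [h1, h2, inner_neg_left, inner_sub_right, real_inner_self_eq_norm_sq] at h
    linarith [real_inner_comm b (s - w)]
  have hab : ⟪a, b⟫ ≤ -‖a‖ ^ 2 := by
    have h := proj_inner_le hAcv hPA w hZA
    have h1 : w - PA w = -a := by rw [ha]; abel
    have h2 : Z - PA w = -b - a := by rw [← hZw, ha]; abel
    rw [h1, h2, inner_neg_left, inner_sub_right, inner_neg_right,
      real_inner_self_eq_norm_sq] at h
    linarith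
  -- scalar argument
  have e1 : α * ‖a‖ ^ 2 + β * ⟪a, b⟫ = ‖a‖ ^ 2 := by
    have h' : ⟪c - w, a⟫ = α * ‖a‖ ^ 2 + β * ⟪a, b⟫ := by
      rw [← hαβ, inner_add_left, real_inner_smul_left, real_inner_smul_left,
        real_inner_self_eq_norm_sq, real_inner_comm b a]
    linarith [hkey1]
  have e2 : α * ⟪a, b⟫ + β * ‖b‖ ^ 2 = ‖b‖ ^ 2 := by
    have h' : ⟪c - w, b⟫ = α * ⟪a, b⟫ + β * ‖b‖ ^ 2 := by
      rw [← hαβ, inner_add_left, real_inner_smul_left, real_inner_smul_left,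
        real_inner_self_eq_norm_sq]
    linarith [hkey2]
  have hCS : ⟪a, b⟫ ^ 2 ≤ ‖a‖ ^ 2 * ‖b‖ ^ 2 := by
    have h4 := abs_le.mp (abs_real_inner_le_norm a b)
    have h5 := sq_le_sq' h4.1 h4.2
    rwa [mul_pow] at h5
  have hCSa : ⟪s - w, a⟫ ^ 2 ≤ ‖s - w‖ ^ 2 * ‖a‖ ^ 2 := by
    have h4 := abs_le.mp (abs_real_inner_le_norm (s - w) a)
    have h5 := sq_le_sq' h4.1 h4.2
    rwa [mul_pow] at h5
  have hCSb : ⟪s - w, b⟫ ^ 2 ≤ ‖s - w‖ ^ 2 * ‖b‖ ^ 2 := by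
    have h4 := abs_le.mp (abs_real_inner_le_norm (s - w) b)
    have h5 := sq_le_sq' h4.1 h4.2
    rwa [mul_pow] at h5
  have hkey : 0 ≤ α * (⟪s - w, a⟫ - ‖a‖ ^ 2) + β * (⟪s - w, b⟫ - ‖b‖ ^ 2) :=
    scalar_key (by positivity) (by positivity) (by positivity)
      hCS hCSa hCSb hab hsa hsb e1 e2
  have hdot : 0 ≤ ⟪s - c, c - w⟫ := by
    have hs1 : ⟪s - w, c - w⟫ = α * ⟪s - w, a⟫ + β * ⟪s - w, b⟫ := by
      rw [← hαβ, inner_add_right, real_inner_smul_right, real_inner_smul_right]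
    have hs2 : ⟪c - w, c - w⟫ = α * ‖a‖ ^ 2 + β * ‖b‖ ^ 2 := by
      nth_rewrite 1 [← hαβ]
      rw [inner_add_left, real_inner_smul_left, real_inner_smul_left,
        real_inner_comm (c - w) a, real_inner_comm (c - w) b, hkey1, hkey2]
    have hs3 : ⟪s - c, c - w⟫ = ⟪s - w, c - w⟫ - ⟪c - w, c - w⟫ := by
      rw [← inner_sub_left]; congr 1; abel
    rw [hs3, hs1, hs2]; linarith
  -- ‖c - s‖² ≤ ‖w - s‖²
  have hcw : ‖c - s‖ ^ 2 ≤ ‖w - s‖ ^ 2 := by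
    have hdecomp : s - w = (s - c) + (c - w) := by abel
    have := norm_add_sq_real (s - c) (c - w)
    rw [← hdecomp] at this
    have h1 : ‖s - w‖ ^ 2 = ‖w - s‖ ^ 2 := by rw [norm_sub_rev]
    have h2 : ‖s - c‖ ^ 2 = ‖c - s‖ ^ 2 := by rw [norm_sub_rev]
    linarith [sq_nonneg ‖c - w‖]
  -- ‖w - s‖ ≤ ‖Z - s‖
  have hPBZ : ‖PB Z - s‖ ^ 2 + ‖Z - PB Z‖ ^ 2 ≤ ‖Z - s‖ ^ 2 := proj_firm hBcv hPB Z hsB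
  have hPBZ' : ‖PB Z - s‖ ≤ ‖Z - s‖ := by
    refine le_of_pow_le_pow_left₀ two_ne_zero (norm_nonneg _) ?_
    have := sq_nonneg ‖Z - PB Z‖
    linarith
  have hws : ‖w - s‖ ≤ ‖Z - s‖ := by
    have hrw : w - s = (2⁻¹ : ℝ) • ((Z - s) + (PB Z - s)) := by rw [hweq]; module
    have h1 : ‖w - s‖ ≤ 2⁻¹ * (‖Z - s‖ + ‖PB Z - s‖) := by
      rw [hrw, norm_smul]
      have h2 := norm_add_le (Z - s) (PB Z - s)
      have h3 : ‖(2⁻¹ : ℝ)‖ = 2⁻¹ := by norm_num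
      rw [h3]
      linarith
    linarith [hPBZ']
  -- firm chain
  have f1 : ‖PB x - s‖ ^ 2 + ‖x - PB x‖ ^ 2 ≤ ‖x - s‖ ^ 2 := proj_firm hBcv hPB x hsB
  have f2 : ‖Z - s‖ ^ 2 + ‖PB x - Z‖ ^ 2 ≤ ‖PB x - s‖ ^ 2 := proj_firm hAcv hPA (PB x) hsA
  have hws2 : ‖w - s‖ ^ 2 ≤ ‖Z - s‖ ^ 2 :=
    pow_le_pow_left₀ (norm_nonneg _) hws 2
  linarith [hcw, hws2, f1, f2]


/-- Global convergence of the successive cCRM with the most violated constraint control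
sequence (distance version): the iterates converge to some point of `C = ∩ᵢ Cᵢ`. -/
theorem stmt8 {n m : ℕ} (C : Fin m → Set (Euc n))
    (hCcl : ∀ i, IsClosed (C i)) (hCcv : ∀ i, Convex ℝ (C i))
    (hne : (⋂ i, C i).Nonempty)
    (P : Fin m → Euc n → Euc n) (hP : ∀ i, IsProjection (C i) (P i))
    (ℓ r : ℕ → Fin m) (x : ℕ → Euc n)
    (hℓ : ∀ k : ℕ, ∀ i : Fin m, infDist (x k) (C i) ≤ infDist (x k) (C (ℓ k)))
    (hr : ∀ k : ℕ, ∀ i : Fin m,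
      infDist (P (ℓ k) (x k)) (C i) ≤ infDist (P (ℓ k) (x k)) (C (r k)))
    (hx : ∀ k : ℕ,
      IsCircumcenter (P (ℓ k)) (P (r k)) (Zbar (P (ℓ k)) (P (r k)) (x k)) (x (k + 1))) :
    ∃ xstar ∈ ⋂ i, C i, Tendsto x atTop (nhds xstar) := by
  obtain ⟨s0, hs0⟩ := hne
  have hs0i : ∀ i, s0 ∈ C i := fun i => Set.mem_iInter.mp hs0 i
  set d1 : ℕ → ℝ := fun k => ‖x k - P (r k) (x k)‖ with hd1def
  set d2 : ℕ → ℝ := fun k => ‖P (r k) (x k) - P (ℓ k) (P (r k) (x k))‖ with hd2def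
  have key : ∀ (s : Euc n), (∀ i, s ∈ C i) → ∀ k : ℕ,
      ‖x (k+1) - s‖ ^ 2 + d1 k ^ 2 + d2 k ^ 2 ≤ ‖x k - s‖ ^ 2 := by
    intro s hs k
    exact step_key (hCcv (ℓ k)) (hCcv (r k)) (hP (ℓ k)) (hP (r k)) (x k) (x (k+1))
      (hx k) (hs (ℓ k)) (hs (r k))
  -- Fejér monotone sequence of squared distances to s0
  set e : ℕ → ℝ := fun k => ‖x k - s0‖ ^ 2 with hedef
  have hmono : ∀ k, e (k+1) ≤ e k := by
    intro k
    have h := key s0 hs0i k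
    have h1 := sq_nonneg (d1 k)
    have h2 := sq_nonneg (d2 k)
    simp only [hedef]
    linarith
  have hanti : Antitone e := antitone_nat_of_succ_le hmono
  have hbdd : BddBelow (Set.range e) := by
    refine ⟨0, ?_⟩
    rintro y ⟨k, rfl⟩
    exact sq_nonneg _
  have htende : Tendsto e atTop (nhds (⨅ k, e k)) := tendsto_atTop_ciInf hanti hbdd
  have htende' : Tendsto (fun k => e (k+1)) atTop (nhds (⨅ k, e k)) :=
    htende.comp (tendsto_add_atTop_nat 1)
  have hdiff : Tendsto (fun k => e k - e (k+1)) atTop (nhds 0) := by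
    have := htende.sub htende'
    simpa using this
  -- d1, d2 → 0
  have hd1sq : Tendsto (fun k => d1 k ^ 2) atTop (nhds 0) := by
    apply squeeze_zero (fun k => sq_nonneg _) (fun k => ?_) hdiff
    have h := key s0 hs0i k
    have h2 := sq_nonneg (d2 k)
    simp only [hedef]
    linarith
  have hd2sq : Tendsto (fun k => d2 k ^ 2) atTop (nhds 0) := by
    apply squeeze_zero (fun k => sq_nonneg _) (fun k => ?_) hdiff
    have h := key s0 hs0i k
    have h2 := sq_nonneg (d1 k)
    simp only [hedef]
    linarith
  have sqrt_trick : ∀ u : ℕ → ℝ, (∀ k, 0 ≤ u k) →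
      Tendsto (fun k => u k ^ 2) atTop (nhds 0) → Tendsto u atTop (nhds 0) := by
    intro u hu husq
    have h := (Real.continuous_sqrt.tendsto 0).comp husq
    simp only [Real.sqrt_zero] at h
    refine h.congr fun k => ?_
    simp only [Function.comp]
    exact Real.sqrt_sq (hu k)
  have hd1 : Tendsto d1 atTop (nhds 0) := sqrt_trick d1 (fun k => norm_nonneg _) hd1sq
  have hd2 : Tendsto d2 atTop (nhds 0) := sqrt_trick d2 (fun k => norm_nonneg _) hd2sq
  have hdsum : Tendsto (fun k => d1 k + d2 k) atTop (nhds 0) := by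
    have := hd1.add hd2
    simpa using this
  -- infDist to each C i tends to 0
  have hdist : ∀ (i : Fin m) (k : ℕ), infDist (x k) (C i) ≤ d1 k + d2 k := by
    intro i k
    refine le_trans (hℓ k i) ?_
    have hZ : P (ℓ k) (P (r k) (x k)) ∈ C (ℓ k) := (hP (ℓ k) (P (r k) (x k))).1
    refine le_trans (infDist_le_dist_of_mem hZ) ?_
    rw [dist_eq_norm]
    calc ‖x k - P (ℓ k) (P (r k) (x k))‖
        ≤ ‖x k - P (r k) (x k)‖ + ‖P (r k) (x k) - P (ℓ k) (P (r k) (x k))‖ :=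
          norm_sub_le_norm_sub_add_norm_sub _ _ _
      _ = d1 k + d2 k := rfl
  -- bounded, extract convergent subsequence
  have hball : ∀ k, x k ∈ closedBall s0 ‖x 0 - s0‖ := by
    intro k
    rw [mem_closedBall, dist_eq_norm]
    have h := hanti (Nat.zero_le k)
    simp only [hedef] at h
    exact le_of_pow_le_pow_left₀ two_ne_zero (norm_nonneg _) h
  obtain ⟨xstar, _, φ, hφ, hlim⟩ :=
    (isCompact_closedBall s0 ‖x 0 - s0‖).tendsto_subseq hball
  -- xstar ∈ ⋂ C i
  have hxstar : ∀ i, xstar ∈ C i := by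
    intro i
    have h1 : Tendsto (fun j => infDist (x (φ j)) (C i)) atTop
        (nhds (infDist xstar (C i))) :=
      ((continuous_infDist_pt (C i)).tendsto xstar).comp hlim
    have h2 : Tendsto (fun j => infDist (x (φ j)) (C i)) atTop (nhds 0) := by
      apply squeeze_zero (fun j => infDist_nonneg) (fun j => hdist i (φ j))
      exact hdsum.comp hφ.tendsto_atTop
    have h3 : infDist xstar (C i) = 0 := tendsto_nhds_unique h1 h2
    exact ((hCcl i).mem_iff_infDist_zero ⟨s0, hs0i i⟩).mpr h3
  refine ⟨xstar, Set.mem_iInter.mpr hxstar, ?_⟩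
  -- Fejér w.r.t. xstar + subsequence → 0 gives convergence
  set f : ℕ → ℝ := fun k => ‖x k - xstar‖ with hfdef
  have hfanti : Antitone f := by
    apply antitone_nat_of_succ_le
    intro k
    have h := key xstar hxstar k
    have h1 := sq_nonneg (d1 k)
    have h2 := sq_nonneg (d2 k)
    refine le_of_pow_le_pow_left₀ two_ne_zero (norm_nonneg _) ?_
    simp only [hfdef]
    linarith
  have hfbdd : BddBelow (Set.range f) := by
    refine ⟨0, ?_⟩
    rintro y ⟨k, rfl⟩
    exact norm_nonneg _
  have htendf : Tendsto f atTop (nhds (⨅ k, f k)) := tendsto_atTop_ciInf hfanti hfbdd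
  have hsubf : Tendsto (fun j => f (φ j)) atTop (nhds 0) := by
    have : Tendsto (fun j => dist (x (φ j)) xstar) atTop (nhds 0) :=
      tendsto_iff_dist_tendsto_zero.mp hlim
    refine this.congr fun j => ?_
    rw [dist_eq_norm]
  have hinf0 : (⨅ k, f k) = 0 :=
    tendsto_nhds_unique (htendf.comp hφ.tendsto_atTop) hsubf
  rw [hinf0] at htendf
  rw [tendsto_iff_norm_sub_tendsto_zero]
  exact htendf
end
end

section
/- Let C_1, …, C_m ⊆ ℝⁿ be closed convex sets with C := ∩_{i=1}^m C_i ≠ ∅. Let {s^k} be generated by s^{k+1} := P_{C_{r(k)}}(P_{C_{ℓ(k)}}(s^k)) from some s^0 ∈ ℝⁿ, where for every k, dist(s^k, C_{ℓ(k)}) ≥ dist(s^k, C_i) for all i and dist(P_{C_{ℓ(k)}}(s^k), C_{r(k)}) ≥ dist(P_{C_{ℓ(k)}}(s^k), C_i) for all i. Assume s^k → s̄ ∈ C and that EB1 holds at s̄ with constant ω ∈ (0,1). Then the sequence {dist(s^k, C)} converges Q-linearly to 0 with asymptotic constant at most β², where β := √(1 − ω²); in particular limsup_{k→∞} dist(s^{k+1},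 C)/dist(s^k, C) ≤ β². -/
noncomputable section

open Filter Metric RealInnerProductSpace

/-!
Projecting onto a most violated constraint `C_j` is a Pythagorean step: for every `c ∈ C`,
`‖P_j z - c‖² + dist(z, C_j)² ≤ ‖z - c‖²`, hence `dist(P_j z, C)² ≤ dist(z, C)² - dist(z, C_j)²`.
Since `C_j` is most violated, EB1 gives `dist(z, C_j) ≥ ω dist(z, C)`, so each of the two
projections in a step of the method shrinks `dist(·, C)` by the factor `β = √(1 - ω²)`, as soon
as the points involved lie in the neighbourhood `V`; this eventually holds because projections
onto sets containing `s̄` keep `s^k → s̄`.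
-/

namespace IsProjection

variable {n : ℕ} {A : Set (Euc n)} {P : Euc n → Euc n}

theorem infDist_eq (hP : IsProjection A P) (x : Euc n) : infDist x A = ‖x - P x‖ := by
  refine le_antisymm ?_ ((le_infDist ⟨P x, (hP x).1⟩).2 fun a ha => ?_)
  · simpa only [dist_eq_norm] using infDist_le_dist_of_mem (hP x).1
  · simpa only [dist_eq_norm] using (hP x).2 a ha

theorem isClosed (hP : IsProjection A P) : IsClosed A := by
  refine closure_subset_iff_isClosed.1 fun x hx => ?_
  have hx0 : infDist x A = 0 := (mem_closure_iff_infDist_zero ⟨P x, (hP x).1⟩).1 hx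
  rw [hP.infDist_eq, norm_sub_eq_zero_iff] at hx0
  exact hx0 ▸ (hP x).1

theorem inner_sub_nonpos (hA : Convex ℝ A) (hP : IsProjection A P) (x : Euc n) {a : Euc n}
    (ha : a ∈ A) : ⟪x - P x, a - P x⟫ ≤ 0 := by
  have : Nonempty A := ⟨⟨a, ha⟩⟩
  have hbdd : BddBelow (Set.range fun w : A => ‖x - w‖) :=
    ⟨0, Set.forall_mem_range.2 fun _ => norm_nonneg _⟩
  have hmin : ‖x - P x‖ = ⨅ w : A, ‖x - w‖ :=
    le_antisymm (le_ciInf fun w => (hP x).2 w w.2) (ciInf_le hbdd ⟨P x, (hP x).1⟩)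
  exact (norm_eq_iInf_iff_real_inner_le_zero hA (hP x).1).1 hmin a ha

theorem norm_sub_sq_add_norm_sub_sq_le (hA : Convex ℝ A) (hP : IsProjection A P) (x : Euc n)
    {a : Euc n} (ha : a ∈ A) : ‖P x - a‖ ^ 2 + ‖x - P x‖ ^ 2 ≤ ‖x - a‖ ^ 2 := by
  have hinner : ⟪x - P x, P x - a⟫ = -⟪x - P x, a - P x⟫ := by
    rw [← inner_neg_right, neg_sub]
  have hexpand : ‖x - a‖ ^ 2 = ‖x - P x‖ ^ 2 + 2 * ⟪x - P x, P x - a⟫ + ‖P x - a‖ ^ 2 := by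
    rw [← norm_add_sq_real, sub_add_sub_cancel]
  linarith [hP.inner_sub_nonpos hA x ha]

theorem dist_le_two_mul_dist (hP : IsProjection A P) (x : Euc n) {a : Euc n} (ha : a ∈ A) :
    dist (P x) a ≤ 2 * dist x a := by
  have hnear : dist (P x) x ≤ dist x a := by
    simpa only [dist_eq_norm, norm_sub_rev (P x)] using (hP x).2 a ha
  linarith [dist_triangle (P x) x a]

theorem infDist_sq_le (hA : Convex ℝ A) (hP : IsProjection A P) {K : Set (Euc n)}
    (hK : IsClosed K) (hKne : K.Nonempty) (hKA : K ⊆ A) (z : Euc n) :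
    infDist (P z) K ^ 2 ≤ infDist z K ^ 2 - infDist z A ^ 2 := by
  obtain ⟨c, hcK, hc⟩ := hK.exists_infDist_eq_dist hKne z
  have hPc : infDist (P z) K ≤ ‖P z - c‖ := by
    simpa only [dist_eq_norm] using infDist_le_dist_of_mem hcK
  rw [hc, dist_eq_norm, hP.infDist_eq]
  nlinarith [hP.norm_sub_sq_add_norm_sub_sq_le hA z (hKA hcK), infDist_nonneg (x := P z) (s := K)]

theorem infDist_le_sqrt_mul (hA : Convex ℝ A) (hP : IsProjection A P) {K : Set (Euc n)}
    (hK : IsClosed K) (hKne : K.Nonempty) (hKA : K ⊆ A) {ω : ℝ} (hω : 0 ≤ ω) {z : Euc n}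
    (hz : ω * infDist z K ≤ infDist z A) :
    infDist (P z) K ≤ Real.sqrt (1 - ω ^ 2) * infDist z K := by
  have hsq : infDist (P z) K ^ 2 ≤ (1 - ω ^ 2) * infDist z K ^ 2 := by
    have hωd : (ω * infDist z K) ^ 2 ≤ infDist z A ^ 2 :=
      pow_le_pow_left₀ (mul_nonneg hω infDist_nonneg) hz 2
    linarith [hP.infDist_sq_le hA hK hKne hKA z]
  calc infDist (P z) K ≤ Real.sqrt ((1 - ω ^ 2) * infDist z K ^ 2) :=
        Real.le_sqrt_of_sq_le hsq
    _ = Real.sqrt (1 - ω ^ 2) * infDist z K := by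
        rw [Real.sqrt_mul' _ (sq_nonneg _), Real.sqrt_sq infDist_nonneg]

end IsProjection

theorem tendsto_of_isProjection {n : ℕ} {A : ℕ → Set (Euc n)} {Q : ℕ → Euc n → Euc n}
    (hQ : ∀ k, IsProjection (A k) (Q k)) {x : ℕ → Euc n} {a : Euc n} (ha : ∀ k, a ∈ A k)
    (hx : Tendsto x atTop (nhds a)) : Tendsto (fun k => Q k (x k)) atTop (nhds a) := by
  rw [tendsto_iff_dist_tendsto_zero] at hx ⊢
  refine squeeze_zero (fun k => dist_nonneg)
    (fun k => (hQ k).dist_le_two_mul_dist (x k) (ha k)) ?_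
  simpa only [mul_zero] using hx.const_mul 2

theorem limsup_div_le_of_eventually_le {x : ℕ → ℝ} {q : ℝ} (hx : ∀ k, 0 ≤ x k) (hq : 0 ≤ q)
    (h : ∀ᶠ k in atTop, x (k + 1) ≤ q * x k) :
    limsup (fun k => x (k + 1) / x k) atTop ≤ q := by
  refine limsup_le_of_le (isCoboundedUnder_le_of_eventually_le atTop
    (Eventually.of_forall fun k => div_nonneg (hx (k + 1)) (hx k))) ?_
  filter_upwards [h] with k hk
  rcases (hx k).eq_or_lt with h0 | hpos
  · rwa [← h0, div_zero]
  · exact (div_le_iff₀ hpos).2 hk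

theorem stmt13_general {n m : ℕ} (C : Fin m → Set (Euc n))
    (hCcv : ∀ i, Convex ℝ (C i))
    (P : Fin m → Euc n → Euc n) (hP : ∀ i, IsProjection (C i) (P i))
    (ℓ r : ℕ → Fin m) (s : ℕ → Euc n)
    (hs : ∀ k : ℕ, s (k + 1) = P (r k) (P (ℓ k) (s k)))
    (hℓ : ∀ k : ℕ, ∀ i : Fin m, infDist (s k) (C i) ≤ infDist (s k) (C (ℓ k)))
    (hr : ∀ k : ℕ, ∀ i : Fin m,
      infDist (P (ℓ k) (s k)) (C i) ≤ infDist (P (ℓ k) (s k)) (C (r k)))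
    (sbar : Euc n) (hsbar : sbar ∈ ⋂ i, C i)
    (hlim : Tendsto s atTop (nhds sbar))
    (ω : ℝ) (hω : ω ∈ Set.Ioo (0 : ℝ) 1)
    (V : Set (Euc n)) (hV : V ∈ nhds sbar)
    (hEB : ∀ z ∈ V, ω * infDist z (⋂ i, C i) ≤ ⨆ i, infDist z (C i)) :
    Tendsto (fun k => infDist (s k) (⋂ i, C i)) atTop (nhds 0) ∧
      limsup (fun k => infDist (s (k + 1)) (⋂ i, C i) / infDist (s k) (⋂ i, C i))
          atTop ≤ Real.sqrt (1 - ω ^ 2) ^ 2 := by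
  set K := ⋂ i, C i
  set β := Real.sqrt (1 - ω ^ 2)
  have hKcl : IsClosed K := isClosed_iInter fun i => (hP i).isClosed
  have hcontract : ∀ z ∈ V, ∀ j, (∀ i, infDist z (C i) ≤ infDist z (C j)) →
      infDist (P j z) K ≤ β * infDist z K := fun z hz j hj =>
    (hP j).infDist_le_sqrt_mul (hCcv j) hKcl ⟨sbar, hsbar⟩ (Set.iInter_subset C j) hω.1.le
      ((hEB z hz).trans (Real.iSup_le hj infDist_nonneg))
  have hmid : Tendsto (fun k => P (ℓ k) (s k)) atTop (nhds sbar) :=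
    tendsto_of_isProjection (fun k => hP (ℓ k)) (fun k => Set.mem_iInter.1 hsbar (ℓ k)) hlim
  refine ⟨?_, limsup_div_le_of_eventually_le (x := fun k => infDist (s k) K)
    (fun k => infDist_nonneg) (sq_nonneg β) ?_⟩
  · have h := ((continuous_infDist_pt K).tendsto sbar).comp hlim
    rwa [infDist_zero_of_mem hsbar] at h
  filter_upwards [hlim.eventually_mem hV, hmid.eventually_mem hV] with k hsk hmidk
  calc infDist (s (k + 1)) K = infDist (P (r k) (P (ℓ k) (s k))) K := by rw [hs k]
    _ ≤ β * infDist (P (ℓ k) (s k)) K := hcontract _ hmidk _ (hr k)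
    _ ≤ β * (β * infDist (s k) K) :=
        mul_le_mul_of_nonneg_left (hcontract _ hsk _ (hℓ k)) (Real.sqrt_nonneg _)
    _ = β ^ 2 * infDist (s k) K := by ring

/-- Under EB1 at the limit point, the distances to `C` along the sequential projection
method with the most violated constraint control converge Q-linearly to `0` with
asymptotic constant at most `β² = 1 - ω²`. -/
theorem stmt13 {n m : ℕ} (C : Fin m → Set (Euc n))
    (hCcl : ∀ i, IsClosed (C i)) (hCcv : ∀ i, Convex ℝ (C i))
    (hne : (⋂ i, C i).Nonempty)
    (P : Fin m → Euc n → Euc n) (hP : ∀ i, IsProjection (C i) (P i))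
    (ℓ r : ℕ → Fin m) (s : ℕ → Euc n)
    (hs : ∀ k : ℕ, s (k + 1) = P (r k) (P (ℓ k) (s k)))
    (hℓ : ∀ k : ℕ, ∀ i : Fin m, infDist (s k) (C i) ≤ infDist (s k) (C (ℓ k)))
    (hr : ∀ k : ℕ, ∀ i : Fin m,
      infDist (P (ℓ k) (s k)) (C i) ≤ infDist (P (ℓ k) (s k)) (C (r k)))
    (sbar : Euc n) (hsbar : sbar ∈ ⋂ i, C i)
    (hlim : Tendsto s atTop (nhds sbar))
    (ω : ℝ) (hω : ω ∈ Set.Ioo (0 : ℝ) 1)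
    (V : Set (Euc n)) (hV : V ∈ nhds sbar)
    (hEB : ∀ z ∈ V, ω * infDist z (⋂ i, C i) ≤ ⨆ i, infDist z (C i)) :
    Tendsto (fun k => infDist (s k) (⋂ i, C i)) atTop (nhds 0) ∧
      limsup (fun k => infDist (s (k + 1)) (⋂ i, C i) / infDist (s k) (⋂ i, C i))
          atTop ≤ Real.sqrt (1 - ω ^ 2) ^ 2 :=
  stmt13_general C hCcv P hP ℓ r s hs hℓ hr sbar hsbar hlim ω hω V hV hEB
end
end

section
/- For i = 1, …, m let f_i : ℝⁿ → ℝ be convex, C_i := {x ∈ ℝⁿ : f_i(x) ≤ 0}, and C := ∩_{i=1}^m C_i ≠ ∅. Suppose EB2 holds at z̄ ∈ C with constant ω ∈ (0,1) on a neighborhood V of z̄, and let ε ≥ ω be such that f_i(z) ≤ ε · dist(z, C_i) for all z in a ball B ⊆ V centered at z̄ and all i. Let z ∈ B and let ℓ, r ∈ {1, …, m} satisfy f_ℓ(z) ≥ f_i(z) for all i and f_r(P_{C_ℓ}(z)) ≥ f_i(P_{C_ℓ}(z)) for all i. Then, with β := √(1 − (ω/ε)²), dist(P_{C_r}(P_{C_ℓ}(z)),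 C) ≤ β² · dist(z, C). -/
noncomputable section

open Filter Metric RealInnerProductSpace

/-- If every point of a nonempty set is at distance at least `a` from `x`, then
`a ≤ infDist x s`. -/
lemma le_infDist_aux {X : Type*} [MetricSpace X] {s : Set X} (hs : s.Nonempty) {x : X} {a : ℝ}
    (h : ∀ y ∈ s, a ≤ dist x y) : a ≤ infDist x s := by
  by_contra hlt
  push_neg at hlt
  obtain ⟨y, hy, hdy⟩ := (infDist_lt_iff hs).mp hlt
  exact absurd (h y hy) (not_le.mpr hdy)

/-- Variational inequality for a metric projection onto a convex set. -/
lemma proj_inner {n : ℕ} {A : Set (Euc n)} (hA : Convex ℝ A) {P : Euc n → Euc n}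
    (hP : IsProjection A P) (x : Euc n) {a : Euc n} (ha : a ∈ A) :
    ⟪x - P x, a - P x⟫ ≤ 0 := by
  have hmem := (hP x).1
  have key : (‖x - P x‖ = ⨅ w : A, ‖x - w‖) := by
    haveI : Nonempty A := ⟨⟨a, ha⟩⟩
    refine le_antisymm (le_ciInf fun w => (hP x).2 w w.2) ?_
    exact ciInf_le ⟨0, fun t ⟨w, hw⟩ => hw ▸ norm_nonneg _⟩ (⟨P x, hmem⟩ : A)
  exact (norm_eq_iInf_iff_real_inner_le_zero hA hmem).mp key a ha

/-- Pythagoras-type inequality for projections onto convex sets. -/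
lemma proj_pyth {n : ℕ} {A : Set (Euc n)} (hA : Convex ℝ A) {P : Euc n → Euc n}
    (hP : IsProjection A P) (x : Euc n) {c : Euc n} (hc : c ∈ A) :
    ‖P x - c‖ ^ 2 + ‖x - P x‖ ^ 2 ≤ ‖x - c‖ ^ 2 := by
  have hinner := proj_inner hA hP x hc
  have hexp : ‖x - c‖ ^ 2 = ‖x - P x‖ ^ 2 + 2 * ⟪x - P x, P x - c⟫ + ‖P x - c‖ ^ 2 := by
    have := norm_add_sq_real (x - P x) (P x - c)
    simpa using this
  have : ⟪x - P x, P x - c⟫ = - ⟪x - P x, c - P x⟫ := by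
    rw [← inner_neg_right]; congr 1; abel
  nlinarith [hinner, hexp, this]

/-- Under EB2, one step of the sequential projection method with the most violated
constraint control (function value version) contracts the distance to `C` by the factor
`β² = 1 - (ω/ε)²`. -/
theorem stmt17 {n m : ℕ} (f : Fin m → Euc n → ℝ)
    (hf : ∀ i, ConvexOn ℝ Set.univ (f i))
    (C : Fin m → Set (Euc n)) (hC : ∀ i, C i = {x | f i x ≤ 0})
    (hne : (⋂ i, C i).Nonempty)
    (zbar : Euc n) (hzbar : zbar ∈ ⋂ i, C i)
    (ω : ℝ) (hω : ω ∈ Set.Ioo (0 : ℝ) 1)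
    (V : Set (Euc n)) (hV : V ∈ nhds zbar)
    (hEB : ∀ z ∈ V, ω * infDist z (⋂ i, C i) ≤ ⨆ i, f i z)
    (ε : ℝ) (hε : ω ≤ ε)
    (ρ : ℝ) (hρ : 0 < ρ) (hBV : closedBall zbar ρ ⊆ V)
    (hsg : ∀ z ∈ closedBall zbar ρ, ∀ i : Fin m, f i z ≤ ε * infDist z (C i))
    (z : Euc n) (hz : z ∈ closedBall zbar ρ)
    (P : Fin m → Euc n → Euc n) (hP : ∀ i, IsProjection (C i) (P i))
    (ℓ r : Fin m)
    (hℓ : ∀ i, f i z ≤ f ℓ z)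
    (hr : ∀ i, f i (P ℓ z) ≤ f r (P ℓ z)) :
    infDist (P r (P ℓ z)) (⋂ i, C i) ≤
      Real.sqrt (1 - (ω / ε) ^ 2) ^ 2 * infDist z (⋂ i, C i) := by
  haveI : Nonempty (Fin m) := ⟨ℓ⟩
  have hε0 : (0 : ℝ) < ε := lt_of_lt_of_le hω.1 hε
  set κ := ω / ε with hκ
  have hκ0 : 0 < κ := div_pos hω.1 hε0
  have hκ1 : κ ≤ 1 := div_le_one_of_le₀ hε (le_of_lt hε0)
  have hβ0 : 0 ≤ 1 - κ ^ 2 := by nlinarith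
  -- convexity of each C i
  have hconv : ∀ i, Convex ℝ (C i) := by
    intro i
    rw [hC i]
    have := (hf i).convex_le 0
    simpa using this
  have hCsub : ∀ i, (⋂ j, C j) ⊆ C i := fun i => Set.iInter_subset _ i
  -- key contraction lemma for one projection step
  have key : ∀ (w : Euc n) (j : Fin m),
      infDist (P j w) (⋂ i, C i) ^ 2 + ‖w - P j w‖ ^ 2 ≤ infDist w (⋂ i, C i) ^ 2 := by
    intro w j
    set s := infDist (P j w) (⋂ i, C i) ^ 2 + ‖w - P j w‖ ^ 2 with hs
    have hs0 : 0 ≤ s := add_nonneg (sq_nonneg _) (sq_nonneg _)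
    have hle : ∀ c ∈ (⋂ i, C i), Real.sqrt s ≤ dist w c := by
      intro c hc
      have hpy := proj_pyth (hconv j) (hP j) w (hCsub j hc)
      have h1 : infDist (P j w) (⋂ i, C i) ≤ dist (P j w) c := infDist_le_dist_of_mem hc
      have h2 : s ≤ dist w c ^ 2 := by
        have hd : dist (P j w) c = ‖P j w - c‖ := by rw [dist_eq_norm]
        have hd2 : dist w c = ‖w - c‖ := by rw [dist_eq_norm]
        have h3 : infDist (P j w) (⋂ i, C i) ^ 2 ≤ ‖P j w - c‖ ^ 2 := by
          rw [← hd]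
          exact pow_le_pow_left₀ infDist_nonneg h1 2
        rw [hd2]; linarith
      calc Real.sqrt s ≤ Real.sqrt (dist w c ^ 2) := Real.sqrt_le_sqrt h2
        _ = dist w c := Real.sqrt_sq dist_nonneg
    have hsq : Real.sqrt s ≤ infDist w (⋂ i, C i) := le_infDist_aux hne hle
    calc s = Real.sqrt s ^ 2 := (Real.sq_sqrt hs0).symm
      _ ≤ infDist w (⋂ i, C i) ^ 2 := pow_le_pow_left₀ (Real.sqrt_nonneg _) hsq 2
  -- one step of the method with the most-violated-constraint control
  have step : ∀ w ∈ closedBall zbar ρ, ∀ j : Fin m, (∀ i, f i w ≤ f j w) →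
      infDist (P j w) (⋂ i, C i) ^ 2 ≤ (1 - κ ^ 2) * infDist w (⋂ i, C i) ^ 2 := by
    intro w hw j hj
    have hEBw : ω * infDist w (⋂ i, C i) ≤ ⨆ i, f i w := hEB w (hBV hw)
    have hsup : (⨆ i, f i w) ≤ f j w := ciSup_le hj
    have hfj : f j w ≤ ε * infDist w (C j) := hsg w hw j
    have hdistj : infDist w (C j) ≤ ‖w - P j w‖ := by
      have := infDist_le_dist_of_mem (hP j w).1 (x := w)
      rwa [dist_eq_norm] at this
    have h1 : ω * infDist w (⋂ i, C i) ≤ ε * ‖w - P j w‖ := by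
      calc ω * infDist w (⋂ i, C i) ≤ ⨆ i, f i w := hEBw
        _ ≤ f j w := hsup
        _ ≤ ε * infDist w (C j) := hfj
        _ ≤ ε * ‖w - P j w‖ := by
            exact mul_le_mul_of_nonneg_left hdistj (le_of_lt hε0)
    have h2 : κ * infDist w (⋂ i, C i) ≤ ‖w - P j w‖ := by
      rw [hκ, div_mul_eq_mul_div, div_le_iff₀ hε0]
      nlinarith [h1]
    have h3 : (κ * infDist w (⋂ i, C i)) ^ 2 ≤ ‖w - P j w‖ ^ 2 :=
      pow_le_pow_left₀ (mul_nonneg (le_of_lt hκ0) infDist_nonneg) h2 2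
    have h4 := key w j
    nlinarith [h3, h4]
  -- the first projected point stays in the ball
  have hPz : P ℓ z ∈ closedBall zbar ρ := by
    have hzbarℓ : zbar ∈ C ℓ := hCsub ℓ hzbar
    have hpy := proj_pyth (hconv ℓ) (hP ℓ) z hzbarℓ
    have h1 : ‖P ℓ z - zbar‖ ^ 2 ≤ ‖z - zbar‖ ^ 2 := by nlinarith [sq_nonneg ‖z - P ℓ z‖]
    have h2 : ‖P ℓ z - zbar‖ ≤ ‖z - zbar‖ :=
      (abs_le_of_sq_le_sq' h1 (norm_nonneg _)).2
    rw [mem_closedBall, dist_eq_norm]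
    rw [mem_closedBall, dist_eq_norm] at hz
    exact le_trans h2 hz
  -- combine the two steps
  have s1 := step z hz ℓ hℓ
  have s2 := step (P ℓ z) hPz r hr
  set d := infDist z (⋂ i, C i) with hd
  set d1 := infDist (P ℓ z) (⋂ i, C i) with hd1
  set d2 := infDist (P r (P ℓ z)) (⋂ i, C i) with hd2
  have hd0 : 0 ≤ d := infDist_nonneg
  have hd20 : 0 ≤ d2 := infDist_nonneg
  have hcomb : d2 ^ 2 ≤ ((1 - κ ^ 2) * d) ^ 2 := by
    calc d2 ^ 2 ≤ (1 - κ ^ 2) * d1 ^ 2 := s2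
      _ ≤ (1 - κ ^ 2) * ((1 - κ ^ 2) * d ^ 2) := mul_le_mul_of_nonneg_left s1 hβ0
      _ = ((1 - κ ^ 2) * d) ^ 2 := by ring
  have hfinal : d2 ≤ (1 - κ ^ 2) * d := by
    have h := Real.sqrt_le_sqrt hcomb
    rwa [Real.sqrt_sq hd20, Real.sqrt_sq (mul_nonneg hβ0 hd0)] at h
  have hsqrt : Real.sqrt (1 - (ω / ε) ^ 2) ^ 2 = 1 - κ ^ 2 := by
    rw [← hκ]; exact Real.sq_sqrt hβ0
  rw [hsqrt]
  exact hfinal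
end
end
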